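/- Let U ⊆ ℝ² be an open neighborhood of 0 and let f = (x,y,z,p,q) : U → ℝ⁵ be a smooth map whose total derivative Df(0) : ℝ² → ℝ⁵ is injective, and which satisfies the contact condition and the Hess = 1 condition on U. If neither the derivative at 0 of π₁∘f = (x,y,z) nor the derivative at 0 of π₂∘f = (p, q, p·x + q·y − z) is injective, then the derivative at 0 of the map (x,q) : U → ℝ² is a linear isomorphism, or the derivative at 0 of the map (y,p) : U → ℝ² is a linear isomorphism. -/

import Mathlib

noncomputable section

/-- Partial derivative in the direction `(1,0)`. -/
def pu (g : ℝ × ℝ → ℝ) (a : ℝ × ℝ) : ℝ := fderiv ℝ g a (1, 0)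

/-- Partial derivative in the direction `(0,1)`. -/
def pv (g : ℝ × ℝ → ℝ) (a : ℝ × ℝ) : ℝ := fderiv ℝ g a (0, 1)

/-- Jacobian determinant `g_u h_v - g_v h_u`. -/
def Jac (g h : ℝ × ℝ → ℝ) (a : ℝ × ℝ) : ℝ := pu g a * pv h a - pv g a * pu h a

private lemma clm_eval (L : ℝ × ℝ →L[ℝ] ℝ) (v : ℝ × ℝ) :
    L v = v.1 * L (1, 0) + v.2 * L (0, 1) := by
  have hv : v = v.1 • ((1 : ℝ), (0 : ℝ)) + v.2 • ((0 : ℝ), (1 : ℝ)) := by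
    ext <;> simp
  conv_lhs => rw [hv]
  simp only [map_add, map_smul, smul_eq_mul]

private lemma det_aux {a b c d v1 v2 : ℝ} (h1 : v1 * a + v2 * b = 0)
    (h2 : v1 * c + v2 * d = 0) (hv : ¬(v1 = 0 ∧ v2 = 0)) :
    a * d - b * c = 0 := by
  by_contra hdet
  have e1 : v1 * (a * d - b * c) = 0 := by linear_combination d * h1 - b * h2
  have e2 : v2 * (a * d - b * c) = 0 := by linear_combination a * h2 - c * h1
  exact hv ⟨(mul_eq_zero.1 e1).resolve_right hdet, (mul_eq_zero.1 e2).resolve_right hdet⟩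

private lemma inj_aux {a b c d : ℝ} (hdet : a * d - b * c ≠ 0) {v1 v2 : ℝ}
    (h1 : v1 * a + v2 * b = 0) (h2 : v1 * c + v2 * d = 0) : v1 = 0 ∧ v2 = 0 := by
  by_contra hv; exact hdet (det_aux h1 h2 hv)

private lemma vne {a b : ℝ} (h : ¬(a = 0 ∧ b = 0)) : ((b, -a) : ℝ × ℝ) ≠ 0 := by
  intro hv
  rw [Prod.ext_iff] at hv
  exact h ⟨neg_eq_zero.1 hv.2, hv.1⟩

private lemma hasFDerivAt_fd2 {U : Set (ℝ × ℝ)} (hU : IsOpen U) {g : ℝ × ℝ → ℝ}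
    (hg : ContDiffOn ℝ (⊤ : ℕ∞) g U) {a : ℝ × ℝ} (ha : a ∈ U) :
    HasFDerivAt (fderiv ℝ g) (fderiv ℝ (fderiv ℝ g) a) a := by
  have h2 : ContDiffAt ℝ 1 (fderiv ℝ g) a :=
    (hg.contDiffAt (hU.mem_nhds ha)).fderiv_right (m := 1) (WithTop.coe_le_coe.2 le_top)
  exact (h2.differentiableAt one_ne_zero).hasFDerivAt

private lemma hasFDerivAt_pdir {U : Set (ℝ × ℝ)} (hU : IsOpen U) {g : ℝ × ℝ → ℝ}
    (hg : ContDiffOn ℝ (⊤ : ℕ∞) g U) {a : ℝ × ℝ} (ha : a ∈ U) (w : ℝ × ℝ) :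
    HasFDerivAt (fun b => fderiv ℝ g b w)
      ((ContinuousLinearMap.apply ℝ ℝ w).comp (fderiv ℝ (fderiv ℝ g) a)) a :=
  (ContinuousLinearMap.apply ℝ ℝ w).hasFDerivAt.comp a (hasFDerivAt_fd2 hU hg ha)

private lemma secondsymm {U : Set (ℝ × ℝ)} (hU : IsOpen U) {g : ℝ × ℝ → ℝ}
    (hg : ContDiffOn ℝ (⊤ : ℕ∞) g U) {a : ℝ × ℝ} (ha : a ∈ U) (v w : ℝ × ℝ) :
    fderiv ℝ (fderiv ℝ g) a v w = fderiv ℝ (fderiv ℝ g) a w v := by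
  have hf : ∀ᶠ b in nhds a, HasFDerivAt g (fderiv ℝ g b) b := by
    filter_upwards [hU.mem_nhds ha] with b hb
    exact ((hg.contDiffAt (hU.mem_nhds hb)).differentiableAt
      (by simp)).hasFDerivAt
  exact second_derivative_symmetric_of_eventually hf (hasFDerivAt_fd2 hU hg ha) v w

private lemma mixed {U : Set (ℝ × ℝ)} (hU : IsOpen U) (h0 : (0 : ℝ × ℝ) ∈ U)
    {x y z p q : ℝ × ℝ → ℝ}
    (hx : ContDiffOn ℝ (⊤ : ℕ∞) x U) (hy : ContDiffOn ℝ (⊤ : ℕ∞) y U)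
    (hz : ContDiffOn ℝ (⊤ : ℕ∞) z U) (hp : ContDiffOn ℝ (⊤ : ℕ∞) p U)
    (hq : ContDiffOn ℝ (⊤ : ℕ∞) q U)
    (hcu : ∀ a ∈ U, pu z a = p a * pu x a + q a * pu y a)
    (hcv : ∀ a ∈ U, pv z a = p a * pv x a + q a * pv y a) :
    fderiv ℝ x 0 (1,0) * fderiv ℝ p 0 (0,1) - fderiv ℝ x 0 (0,1) * fderiv ℝ p 0 (1,0)
      + fderiv ℝ y 0 (1,0) * fderiv ℝ q 0 (0,1)
      - fderiv ℝ y 0 (0,1) * fderiv ℝ q 0 (1,0) = 0 := by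
  have hUn : U ∈ nhds (0 : ℝ × ℝ) := hU.mem_nhds h0
  have hdp : HasFDerivAt p (fderiv ℝ p 0) 0 :=
    ((hp.contDiffAt hUn).differentiableAt (by simp)).hasFDerivAt
  have hdq : HasFDerivAt q (fderiv ℝ q 0) 0 :=
    ((hq.contDiffAt hUn).differentiableAt (by simp)).hasFDerivAt
  have E1 : fderiv ℝ (pu z) 0 = fderiv ℝ (fun a => p a * pu x a + q a * pu y a) 0 :=
    Filter.EventuallyEq.fderiv_eq (Filter.eventuallyEq_of_mem hUn hcu)
  have hpux := hasFDerivAt_pdir hU hx h0 (1,0)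
  have hpuy := hasFDerivAt_pdir hU hy h0 (1,0)
  have hpvx := hasFDerivAt_pdir hU hx h0 (0,1)
  have hpvy := hasFDerivAt_pdir hU hy h0 (0,1)
  have hpuz := hasFDerivAt_pdir hU hz h0 (1,0)
  have hpvz := hasFDerivAt_pdir hU hz h0 (0,1)
  have hRu : HasFDerivAt (fun a => p a * pu x a + q a * pu y a)
      ((p 0 • ((ContinuousLinearMap.apply ℝ ℝ (1,0)).comp (fderiv ℝ (fderiv ℝ x) 0))
        + pu x 0 • fderiv ℝ p 0)
      + (q 0 • ((ContinuousLinearMap.apply ℝ ℝ (1,0)).comp (fderiv ℝ (fderiv ℝ y) 0))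
        + pu y 0 • fderiv ℝ q 0)) 0 := (hdp.mul hpux).add (hdq.mul hpuy)
  have hRv : HasFDerivAt (fun a => p a * pv x a + q a * pv y a)
      ((p 0 • ((ContinuousLinearMap.apply ℝ ℝ (0,1)).comp (fderiv ℝ (fderiv ℝ x) 0))
        + pv x 0 • fderiv ℝ p 0)
      + (q 0 • ((ContinuousLinearMap.apply ℝ ℝ (0,1)).comp (fderiv ℝ (fderiv ℝ y) 0))
        + pv y 0 • fderiv ℝ q 0)) 0 := (hdp.mul hpvx).add (hdq.mul hpvy)
  have E2 : fderiv ℝ (pv z) 0 = fderiv ℝ (fun a => p a * pv x a + q a * pv y a) 0 :=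
    Filter.EventuallyEq.fderiv_eq (Filter.eventuallyEq_of_mem hUn hcv)
  have lhsu : fderiv ℝ (pu z) 0
      = (ContinuousLinearMap.apply ℝ ℝ (1,0)).comp (fderiv ℝ (fderiv ℝ z) 0) := hpuz.fderiv
  have lhsv : fderiv ℝ (pv z) 0
      = (ContinuousLinearMap.apply ℝ ℝ (0,1)).comp (fderiv ℝ (fderiv ℝ z) 0) := hpvz.fderiv
  have eqU : fderiv ℝ (fderiv ℝ z) 0 (0,1) (1,0)
      = p 0 * (fderiv ℝ (fderiv ℝ x) 0 (0,1) (1,0)) + pu x 0 * fderiv ℝ p 0 (0,1)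
      + (q 0 * (fderiv ℝ (fderiv ℝ y) 0 (0,1) (1,0)) + pu y 0 * fderiv ℝ q 0 (0,1)) := by
    have := congrFun (congrArg DFunLike.coe (lhsu.symm.trans (E1.trans hRu.fderiv))) (0,1)
    simpa [ContinuousLinearMap.comp_apply, ContinuousLinearMap.apply_apply,
      ContinuousLinearMap.add_apply, ContinuousLinearMap.smul_apply, smul_eq_mul] using this
  have eqV : fderiv ℝ (fderiv ℝ z) 0 (1,0) (0,1)
      = p 0 * (fderiv ℝ (fderiv ℝ x) 0 (1,0) (0,1)) + pv x 0 * fderiv ℝ p 0 (1,0)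
      + (q 0 * (fderiv ℝ (fderiv ℝ y) 0 (1,0) (0,1)) + pv y 0 * fderiv ℝ q 0 (1,0)) := by
    have := congrFun (congrArg DFunLike.coe (lhsv.symm.trans (E2.trans hRv.fderiv))) (1,0)
    simpa [ContinuousLinearMap.comp_apply, ContinuousLinearMap.apply_apply,
      ContinuousLinearMap.add_apply, ContinuousLinearMap.smul_apply, smul_eq_mul] using this
  have sx := secondsymm hU hx h0 (0,1) (1,0)
  have sy := secondsymm hU hy h0 (0,1) (1,0)
  have sz := secondsymm hU hz h0 (0,1) (1,0)
  rw [sz, sx, sy] at eqU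
  have hXu : pu x 0 = fderiv ℝ x 0 (1,0) := rfl
  have hXv : pv x 0 = fderiv ℝ x 0 (0,1) := rfl
  have hYu : pu y 0 = fderiv ℝ y 0 (1,0) := rfl
  have hYv : pv y 0 = fderiv ℝ y 0 (0,1) := rfl
  rw [hXu, hYu] at eqU
  rw [hXv, hYv] at eqV
  linarith [eqU, eqV]

private lemma bij_of_det {f g : ℝ × ℝ → ℝ} (hdf : DifferentiableAt ℝ f 0)
    (hdg : DifferentiableAt ℝ g 0)
    (hdet : fderiv ℝ f 0 (1,0) * fderiv ℝ g 0 (0,1)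
      - fderiv ℝ f 0 (0,1) * fderiv ℝ g 0 (1,0) ≠ 0) :
    Function.Bijective (fderiv ℝ (fun a => (f a, g a)) 0) := by
  have hL : fderiv ℝ (fun a => (f a, g a)) 0 = (fderiv ℝ f 0).prod (fderiv ℝ g 0) :=
    (hdf.hasFDerivAt.prodMk hdg.hasFDerivAt).fderiv
  rw [hL]
  have hinj : Function.Injective ((fderiv ℝ f 0).prod (fderiv ℝ g 0)) := by
    intro a b hab
    have h0' : ((fderiv ℝ f 0).prod (fderiv ℝ g 0)) (a - b) = 0 := by
      rw [map_sub, hab, sub_self]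
    simp only [ContinuousLinearMap.prod_apply, Prod.ext_iff, Prod.fst_zero,
      Prod.snd_zero] at h0'
    have h1 : (a - b).1 * fderiv ℝ f 0 (1,0) + (a - b).2 * fderiv ℝ f 0 (0,1) = 0 := by
      rw [← clm_eval]; exact h0'.1
    have h2 : (a - b).1 * fderiv ℝ g 0 (1,0) + (a - b).2 * fderiv ℝ g 0 (0,1) = 0 := by
      rw [← clm_eval]; exact h0'.2
    have hv := inj_aux hdet h1 h2
    have : a - b = 0 := Prod.ext hv.1 hv.2
    exact sub_eq_zero.1 this
  refine ⟨hinj, ?_⟩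
  have hinj' : Function.Injective
      (((fderiv ℝ f 0).prod (fderiv ℝ g 0) : (ℝ × ℝ) →L[ℝ] ℝ × ℝ) :
        (ℝ × ℝ) →ₗ[ℝ] ℝ × ℝ) := hinj
  exact (LinearMap.injective_iff_surjective.1 hinj' : _)

theorem stmt2 (U : Set (ℝ × ℝ)) (hU : IsOpen U) (h0 : (0 : ℝ × ℝ) ∈ U)
    (x y z p q : ℝ × ℝ → ℝ)
    (hx : ContDiffOn ℝ (⊤ : ℕ∞) x U) (hy : ContDiffOn ℝ (⊤ : ℕ∞) y U)
    (hz : ContDiffOn ℝ (⊤ : ℕ∞) z U) (hp : ContDiffOn ℝ (⊤ : ℕ∞) p U)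
    (hq : ContDiffOn ℝ (⊤ : ℕ∞) q U)
    (hDf : Function.Injective (fderiv ℝ (fun a => (x a, y a, z a, p a, q a)) 0))
    (hcontact : ∀ a ∈ U, pu z a = p a * pu x a + q a * pu y a ∧
      pv z a = p a * pv x a + q a * pv y a)
    (hhess : ∀ a ∈ U, Jac x y a = Jac p q a)
    (h1 : ¬ Function.Injective (fderiv ℝ (fun a => (x a, y a, z a)) 0))
    (h2 : ¬ Function.Injective
      (fderiv ℝ (fun a => (p a, q a, p a * x a + q a * y a - z a)) 0)) :
    Function.Bijective (fderiv ℝ (fun a => (x a, q a)) 0) ∨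
    Function.Bijective (fderiv ℝ (fun a => (y a, p a)) 0) := by
  classical
  have hUn : U ∈ nhds (0 : ℝ × ℝ) := hU.mem_nhds h0
  have hdx : DifferentiableAt ℝ x 0 :=
    (hx.contDiffAt hUn).differentiableAt (by simp)
  have hdy : DifferentiableAt ℝ y 0 :=
    (hy.contDiffAt hUn).differentiableAt (by simp)
  have hdz : DifferentiableAt ℝ z 0 :=
    (hz.contDiffAt hUn).differentiableAt (by simp)
  have hdp : DifferentiableAt ℝ p 0 :=
    (hp.contDiffAt hUn).differentiableAt (by simp)
  have hdq : DifferentiableAt ℝ q 0 :=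
    (hq.contDiffAt hUn).differentiableAt (by simp)
  have hdw : DifferentiableAt ℝ (fun a => p a * x a + q a * y a - z a) 0 :=
    ((hdp.mul hdx).add (hdq.mul hdy)).sub hdz
  set Xu := fderiv ℝ x 0 (1,0) with hsXu
  set Xv := fderiv ℝ x 0 (0,1) with hsXv
  set Yu := fderiv ℝ y 0 (1,0) with hsYu
  set Yv := fderiv ℝ y 0 (0,1) with hsYv
  set Pu := fderiv ℝ p 0 (1,0) with hsPu
  set Pv := fderiv ℝ p 0 (0,1) with hsPv
  set Qu := fderiv ℝ q 0 (1,0) with hsQu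
  set Qv := fderiv ℝ q 0 (0,1) with hsQv
  -- A = Jac(x,y)(0) = 0 from h1
  have hA : Xu * Yv - Xv * Yu = 0 := by
    obtain ⟨v, hv0, hv⟩ : ∃ v : ℝ × ℝ, v ≠ 0 ∧
        fderiv ℝ (fun a => (x a, y a, z a)) 0 v = 0 := by
      by_contra hcon
      push_neg at hcon
      apply h1
      intro a b hab
      by_contra hne
      exact hcon (a - b) (sub_ne_zero.2 hne) (by rw [map_sub, hab, sub_self])
    have hL1 : fderiv ℝ (fun a => (x a, y a, z a)) 0
        = (fderiv ℝ x 0).prod ((fderiv ℝ y 0).prod (fderiv ℝ z 0)) :=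
      (hdx.hasFDerivAt.prodMk (hdy.hasFDerivAt.prodMk hdz.hasFDerivAt)).fderiv
    rw [hL1] at hv
    simp only [ContinuousLinearMap.prod_apply, Prod.ext_iff, Prod.fst_zero, Prod.snd_zero] at hv
    have hx1 : v.1 * Xu + v.2 * Xv = 0 := by
      rw [hsXu, hsXv, ← clm_eval]; exact hv.1
    have hy1 : v.1 * Yu + v.2 * Yv = 0 := by
      rw [hsYu, hsYv, ← clm_eval]; exact hv.2.1
    refine det_aux hx1 hy1 ?_
    rintro ⟨e1, e2⟩
    exact hv0 (Prod.ext e1 e2)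
  -- B = Jac(p,q)(0) = 0 from h2
  have hB : Pu * Qv - Pv * Qu = 0 := by
    obtain ⟨v, hv0, hv⟩ : ∃ v : ℝ × ℝ, v ≠ 0 ∧
        fderiv ℝ (fun a => (p a, q a, p a * x a + q a * y a - z a)) 0 v = 0 := by
      by_contra hcon
      push_neg at hcon
      apply h2
      intro a b hab
      by_contra hne
      exact hcon (a - b) (sub_ne_zero.2 hne) (by rw [map_sub, hab, sub_self])
    have hL2 : fderiv ℝ (fun a => (p a, q a, p a * x a + q a * y a - z a)) 0
        = (fderiv ℝ p 0).prod ((fderiv ℝ q 0).prod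
            (fderiv ℝ (fun a => p a * x a + q a * y a - z a) 0)) :=
      (hdp.hasFDerivAt.prodMk (hdq.hasFDerivAt.prodMk hdw.hasFDerivAt)).fderiv
    rw [hL2] at hv
    simp only [ContinuousLinearMap.prod_apply, Prod.ext_iff, Prod.fst_zero, Prod.snd_zero] at hv
    have hp1 : v.1 * Pu + v.2 * Pv = 0 := by
      rw [hsPu, hsPv, ← clm_eval]; exact hv.1
    have hq1 : v.1 * Qu + v.2 * Qv = 0 := by
      rw [hsQu, hsQv, ← clm_eval]; exact hv.2.1
    refine det_aux hp1 hq1 ?_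
    rintro ⟨e1, e2⟩
    exact hv0 (Prod.ext e1 e2)
  -- mixed partials relation from the contact condition
  have hC : Xu * Pv - Xv * Pu + Yu * Qv - Yv * Qu = 0 := by
    rw [hsXu, hsXv, hsYu, hsYv, hsPu, hsPv, hsQu, hsQv]
    exact mixed hU h0 hx hy hz hp hq
      (fun a ha => (hcontact a ha).1) (fun a ha => (hcontact a ha).2)
  by_cases hD : Xu * Qv - Xv * Qu = 0
  · by_cases hE : Yu * Pv - Yv * Pu = 0
    · -- both degenerate: contradiction with injectivity of Df(0)
      exfalso
      have hc2 : (Xu * Pv - Xv * Pu) ^ 2 = 0 := by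
        linear_combination (Xu * Pv - Xv * Pu) * hC - (Pu * Qv - Pv * Qu) * hA
          - (Yu * Pv - Yv * Pu) * hD
      have hc : Xu * Pv - Xv * Pu = 0 := by
        have h := sq_nonneg (Xu * Pv - Xv * Pu)
        nlinarith [hc2]
      have hyq : Yu * Qv - Yv * Qu = 0 := by linarith
      have contra : ∀ v : ℝ × ℝ, v ≠ 0 →
          v.1 * Xu + v.2 * Xv = 0 → v.1 * Yu + v.2 * Yv = 0 →
          v.1 * Pu + v.2 * Pv = 0 → v.1 * Qu + v.2 * Qv = 0 → False := by
        intro v hvne hx1 hy1 hp1 hq1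
        have hzu : fderiv ℝ z 0 (1,0) = p 0 * Xu + q 0 * Yu := (hcontact 0 h0).1
        have hzv : fderiv ℝ z 0 (0,1) = p 0 * Xv + q 0 * Yv := (hcontact 0 h0).2
        have hx' : fderiv ℝ x 0 v = 0 := by rw [clm_eval, ← hsXu, ← hsXv]; exact hx1
        have hy' : fderiv ℝ y 0 v = 0 := by rw [clm_eval, ← hsYu, ← hsYv]; exact hy1
        have hp' : fderiv ℝ p 0 v = 0 := by rw [clm_eval, ← hsPu, ← hsPv]; exact hp1
        have hq' : fderiv ℝ q 0 v = 0 := by rw [clm_eval, ← hsQu, ← hsQv]; exact hq1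
        have hz' : fderiv ℝ z 0 v = 0 := by
          rw [clm_eval, hzu, hzv]
          linear_combination (p 0) * hx1 + (q 0) * hy1
        have hL5 : fderiv ℝ (fun a => (x a, y a, z a, p a, q a)) 0
            = (fderiv ℝ x 0).prod ((fderiv ℝ y 0).prod ((fderiv ℝ z 0).prod
                ((fderiv ℝ p 0).prod (fderiv ℝ q 0)))) :=
          (hdx.hasFDerivAt.prodMk (hdy.hasFDerivAt.prodMk (hdz.hasFDerivAt.prodMk
            (hdp.hasFDerivAt.prodMk hdq.hasFDerivAt)))).fderiv
        apply hvne
        apply hDf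
        rw [hL5]
        simp only [ContinuousLinearMap.prod_apply, hx', hy', hz', hp', hq', map_zero]
        rfl
      by_cases hX : Xu = 0 ∧ Xv = 0
      · by_cases hY : Yu = 0 ∧ Yv = 0
        · by_cases hP : Pu = 0 ∧ Pv = 0
          · by_cases hQ : Qu = 0 ∧ Qv = 0
            · exact contra (1, 0) (by simp [Prod.ext_iff])
                (by simp [hX.1]) (by simp [hY.1]) (by simp [hP.1]) (by simp [hQ.1])
            · exact contra (Qv, -Qu) (vne hQ)
                (by simp only []; linear_combination hD)
                (by simp only []; linear_combination hyq)
                (by simp only []; linear_combination hB)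
                (by simp only []; ring)
          · exact contra (Pv, -Pu) (vne hP)
              (by simp only []; linear_combination hc)
              (by simp only []; linear_combination hE)
              (by simp only []; ring)
              (by simp only []; linear_combination -hB)
        · exact contra (Yv, -Yu) (vne hY)
            (by simp only []; linear_combination hA)
            (by simp only []; ring)
            (by simp only []; linear_combination -hE)
            (by simp only []; linear_combination -hyq)
      · exact contra (Xv, -Xu) (vne hX)
          (by simp only []; ring)
          (by simp only []; linear_combination -hA)
          (by simp only []; linear_combination -hc)
          (by simp only []; linear_combination -hD)
    · right
      exact bij_of_det hdy hdp (by rw [← hsYu, ← hsYv, ← hsPu, ← hsPv]; exact hE)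
  · left
    exact bij_of_det hdx hdq (by rw [← hsXu, ← hsXv, ← hsQu, ← hsQv]; exact hD)
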